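/- For any point A of PG(3,q) off the twisted cubic C, let n_d(A) be the number of planes through A meeting C in exactly d points. If A does not lie on any real chord of C then n_2(A) + 3·n_3(A) = C(q+1,2) = q(q+1)/2, while if A lies on a real chord then n_2(A) + 3·n_3(A) = (q^2+3q)/2. -/

import Mathlib

open Projectivization

noncomputable section

variable (F : Type*) [Field F]

lemma cubic_ne_zero (t : F) : ![t^3, t^2, t, 1] ≠ 0 := by
  intro h; have := congrFun h 3; simp at this

lemma e0_ne_zero : (![1, 0, 0, 0] : Fin 4 → F) ≠ 0 := by
  intro h; have := congrFun h 0; simp at this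

/-- The twisted cubic in `PG(3,q)`, in canonical form. -/
def twistedCubic : Set (Projectivization F (Fin 4 → F)) :=
  {x | (∃ t : F, x = Projectivization.mk F ![t^3, t^2, t, 1] (cubic_ne_zero F t)) ∨
    x = Projectivization.mk F ![1, 0, 0, 0] (e0_ne_zero F)}

/-- The set of projective points lying in a linear subspace `W`. -/
def planePts (W : Submodule F (Fin 4 → F)) : Set (Projectivization F (Fin 4 → F)) :=
  {x | x.submodule ≤ W}

/-!
The count works for any set of points of `PG(3, q)` in general position (any four of them
linearly independent), which the twisted cubic is by a Vandermonde determinant.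

Count the pairs (plane `W` through `A`, two-element subset of `C ∩ W`). A plane contains at most
three points of `C`, so counted by planes the total is `n₂ + 3 n₃`. A pair `{P, Q}` lies in
exactly one plane through `A`, the span of `A` and the chord `PQ`, unless `A` is on that chord,
in which case it lies in all `q + 1` planes through the chord. Two chords meet only in a common
point of `C`, so `A ∉ C` lies on at most one chord, and counted by pairs the total is
`C(q + 1, 2) + q · [A lies on a chord]`.
-/

open Module Finset
open scoped LinearAlgebra.Projectivization

theorem Finset.SupIndep.sup_inf_sup {α ι : Type*} [Lattice α] [OrderBot α] [IsModularLattice α]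
    [DecidableEq ι] {f : ι → α} {s t u : Finset ι} (hs : s.SupIndep f) (ht : t ⊆ s)
    (hu : u ⊆ s) : t.sup f ⊓ u.sup f = (t ∩ u).sup f := by
  have hdisj : Disjoint ((t \ u).sup f) (u.sup f) :=
    hs.disjoint_sup_sup (sdiff_subset.trans ht) hu sdiff_disjoint
  conv_lhs => rw [← sdiff_union_inter t u, sup_union, sup_comm]
  rw [sup_inf_assoc_of_le _ (sup_mono inter_subset_right), hdisj.eq_bot, sup_bot_eq]

theorem Finset.sum_choose_two_eq_of_le_three {α : Type*} {s : Finset α} {d : α → ℕ}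
    (hd : ∀ a ∈ s, d a ≤ 3) :
    ∑ a ∈ s, (d a).choose 2 = #{a ∈ s | d a = 2} + 3 * #{a ∈ s | d a = 3} := by
  classical
  have h (a) (ha : a ∈ s) :
      (d a).choose 2 = (if d a = 2 then 1 else 0) + 3 * (if d a = 3 then 1 else 0) := by
    have := hd a ha
    interval_cases d a <;> rfl
  rw [sum_congr rfl h, sum_add_distrib, ← mul_sum, sum_boole, sum_boole]
  simp

open Classical in
theorem Finset.sum_choose_two_eq_sum_card_sup_le {α ι : Type*} [SemilatticeSup α] [OrderBot α]
    [Fintype ι] (P : Finset α) (g : ι → α) :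
    ∑ W ∈ P, (#{i | g i ≤ W}).choose 2 = ∑ e ∈ powersetCard 2 univ, #{W ∈ P | e.sup g ≤ W} := by
  refine (sum_congr rfl fun W _ => ?_).trans
    (sum_card_bipartiteAbove_eq_sum_card_bipartiteBelow (r := fun W (e : Finset ι) => e.sup g ≤ W))
  rw [← card_powersetCard]
  congr 1
  ext e
  simp [bipartiteAbove, mem_powersetCard, Finset.sup_le_iff, subset_iff, and_comm]

theorem Finset.eq_zero_of_forall_sum_mul_pow_eq_zero {R : Type*} [CommRing R] [IsDomain R]
    {S : Finset R} {c : R → R} (h : ∀ e < #S, ∑ t ∈ S, c t * t ^ e = 0) : ∀ t ∈ S, c t = 0 := by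
  let v : Fin #S → R := fun i => S.equivFin.symm i
  have hv : Function.Injective v := Subtype.val_injective.comp S.equivFin.symm.injective
  have hc := Matrix.eq_zero_of_forall_pow_sum_mul_pow_eq_zero (v := c ∘ v) hv fun e => by
    rw [← h e e.2, ← S.sum_coe_sort]
    exact Fintype.sum_equiv S.equivFin.symm _ _ fun _ => rfl
  intro t ht
  simpa [v] using congr_fun hc (S.equivFin ⟨t, ht⟩)

section Projective

variable {K V ι : Type*} [Field K] [AddCommGroup V] [Module K V]

theorem Projectivization.submodule_ne_bot (A : ℙ K V) : A.submodule ≠ ⊥ := fun h => by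
  have := A.finrank_submodule
  rw [h, finrank_bot] at this
  exact zero_ne_one this

theorem Projectivization.supIndep_submodule_mk {v : ι → V} (hv : ∀ i, v i ≠ 0) {s : Finset ι}
    (hs : LinearIndepOn K v s) : s.SupIndep fun i => (mk K (v i) (hv i)).submodule := by
  simp_rw [submodule_mk]
  rw [← iSupIndep_comp_coe_iff_supIndep]
  exact hs.iSupIndep_span_singleton

theorem Finset.SupIndep.finrank_sup_submodule [FiniteDimensional K V] {f : ι → ℙ K V}
    {s : Finset ι} (hs : s.SupIndep fun i => (f i).submodule) :
    finrank K ↥(s.sup fun i => (f i).submodule) = #s := by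
  classical
  induction s using Finset.induction_on with
  | empty => simp
  | insert i s hi ih =>
    have hdisj : Disjoint (f i).submodule (s.sup fun i => (f i).submodule) :=
      hs (subset_insert i s) (mem_insert_self i s) hi
    have := Submodule.finrank_sup_add_finrank_inf_eq (f i).submodule
      (s.sup fun i => (f i).submodule)
    rw [hdisj.eq_bot, finrank_bot, add_zero, finrank_submodule,
      ih (hs.subset (subset_insert i s))] at this
    rw [sup_insert, this, card_insert_of_notMem hi, add_comm]

end Projective

section Subspaces

variable {K V : Type*} [Field K] [AddCommGroup V] [Module K V] [FiniteDimensional K V]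

theorem Submodule.finrank_comap_mkQ (U : Submodule K V) (U' : Submodule K (V ⧸ U)) :
    finrank K (U'.comap U.mkQ) = finrank K U + finrank K U' := by
  have hmap : (U'.comap U.mkQ).map U.mkQ = U' :=
    Submodule.map_comap_eq_self (by rw [Submodule.range_mkQ]; exact le_top)
  have e := Submodule.quotientQuotientEquivQuotient U _ (Submodule.le_comap_mkQ U U')
  rw [hmap] at e
  have h1 := Submodule.finrank_quotient_add_finrank (U'.comap U.mkQ)
  have h2 := Submodule.finrank_quotient_add_finrank U'
  have h3 := Submodule.finrank_quotient_add_finrank U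
  rw [e.finrank_eq] at h2
  omega

theorem Submodule.card_finrank_succ_containing (U : Submodule K V) :
    Nat.card {W : Submodule K V // finrank K W = finrank K U + 1 ∧ U ≤ W} =
      Nat.card (ℙ K (V ⧸ U)) := by
  rw [Nat.card_congr (Projectivization.equivSubmodule K (V ⧸ U))]
  symm
  refine Nat.card_eq_of_bijective (fun H => ⟨H.1.comap U.mkQ,
    by rw [Submodule.finrank_comap_mkQ, H.2], Submodule.le_comap_mkQ U H.1⟩) ⟨?_, ?_⟩
  · intro H H' h
    exact Subtype.ext (Submodule.comap_injective_of_surjective U.mkQ_surjective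
      (congrArg Subtype.val h))
  · rintro ⟨W, hW, hUW⟩
    have hcomap : (W.map U.mkQ).comap U.mkQ = W := by
      rw [Submodule.comap_map_mkQ, sup_eq_right.mpr hUW]
    refine ⟨⟨W.map U.mkQ, ?_⟩, Subtype.ext hcomap⟩
    have := Submodule.finrank_comap_mkQ U (W.map U.mkQ)
    rw [hcomap] at this
    omega

open Classical in
theorem card_planes_through_point_and_line [Finite K] (hV : finrank K V = 4) (A : ℙ K V)
    {L : Submodule K V} (hL : finrank K L = 2) :
    Nat.card {W : Submodule K V // finrank K W = 3 ∧ A.submodule ≤ W ∧ L ≤ W} =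
      if A.submodule ≤ L then Nat.card K + 1 else 1 := by
  split_ifs with hAL
  · have hquot : finrank K (V ⧸ L) = 2 := by
      have := L.finrank_quotient_add_finrank
      omega
    rw [← card_of_finrank_two K (V ⧸ L) hquot, ← L.card_finrank_succ_containing, hL]
    exact Nat.card_congr <| Equiv.subtypeEquivRight fun W =>
      ⟨fun h => ⟨h.1, h.2.2⟩, fun h => ⟨h.1, hAL.trans h.2, h.2⟩⟩
  · have hrep : A.rep ∉ L := by
      rwa [submodule_eq, Submodule.span_singleton_le_iff_mem] at hAL
    have hU : finrank K ↥(L ⊔ A.submodule) = 3 := by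
      rw [submodule_eq, Submodule.finrank_sup_span_singleton hrep, hL]
    rw [Nat.card_eq_one_iff_exists]
    refine ⟨⟨L ⊔ A.submodule, hU, le_sup_right, le_sup_left⟩, fun ⟨W, hW, hAW, hLW⟩ => ?_⟩
    exact Subtype.ext (Submodule.eq_of_le_of_finrank_eq (sup_le hLW hAW) (by rw [hU, hW])).symm

end Subspaces

section GeneralPosition

variable {K V ι : Type*} [Field K] [AddCommGroup V] [Module K V]

def InGeneralPosition (f : ι → ℙ K V) : Prop :=
  ∀ s : Finset ι, #s ≤ finrank K V → s.SupIndep fun i => (f i).submodule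

namespace InGeneralPosition

variable {f : ι → ℙ K V}

theorem card_le_finrank [FiniteDimensional K V] (hf : InGeneralPosition f) {W : Submodule K V}
    (hW : finrank K W < finrank K V) {s : Finset ι} (hs : ∀ i ∈ s, (f i).submodule ≤ W) :
    #s ≤ finrank K W := by
  by_contra! hlt
  obtain ⟨t, hts, ht⟩ := exists_subset_card_eq (Nat.succ_le_of_lt hlt)
  have hle : (t.sup fun i => (f i).submodule) ≤ W := Finset.sup_le fun i hi => hs i (hts hi)
  have := Submodule.finrank_mono hle
  rw [(hf t (by omega)).finrank_sup_submodule, ht] at this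
  omega

theorem injective (hf : InGeneralPosition f) (hV : 2 ≤ finrank K V) : Function.Injective f := by
  classical
  intro i j hij
  by_contra hne
  have hdisj : Disjoint (f i).submodule (f j).submodule :=
    (hf {i, j} (card_le_two.trans hV)).pairwiseDisjoint (by simp) (by simp) hne
  rw [hij, disjoint_self] at hdisj
  exact submodule_ne_bot (f j) hdisj

theorem eq_of_le_sup_of_le_sup (hf : InGeneralPosition f) (hV : 4 ≤ finrank K V) {A : ℙ K V}
    (hA : A ∉ Set.range f) {s t : Finset ι} (hs : #s = 2) (ht : #t = 2)
    (hAs : A.submodule ≤ s.sup fun i => (f i).submodule)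
    (hAt : A.submodule ≤ t.sup fun i => (f i).submodule) : s = t := by
  classical
  by_contra hst
  have hsup := (hf (s ∪ t) ((card_union_le s t).trans (by omega))).sup_inf_sup
    subset_union_left subset_union_right
  have hA' : A.submodule ≤ (s ∩ t).sup fun i => (f i).submodule := hsup ▸ le_inf hAs hAt
  have hcard : #(s ∩ t) < #s := card_lt_card <| inter_subset_left.ssubset_of_ne fun h =>
    hst (eq_of_subset_of_card_le (inter_eq_left.mp h) (by omega))
  obtain h0 | h1 := Nat.le_one_iff_eq_zero_or_eq_one.mp (by omega : #(s ∩ t) ≤ 1)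
  · rw [card_eq_zero.mp h0, sup_empty, le_bot_iff] at hA'
    exact submodule_ne_bot A hA'
  · obtain ⟨i, hi⟩ := card_eq_one.mp h1
    rw [hi, sup_singleton] at hA'
    exact hA ⟨i, submodule_injective (Submodule.eq_of_le_of_finrank_eq hA' (by
      simp [finrank_submodule])).symm⟩

open Classical in
theorem card_chords (hf : InGeneralPosition f) (hV : 4 ≤ finrank K V) {A : ℙ K V}
    (hA : A ∉ Set.range f) :
    Nat.card {e : Finset ι // #e = 2 ∧ A.submodule ≤ e.sup fun i => (f i).submodule} =
      if ∃ P Q, P ∈ Set.range f ∧ Q ∈ Set.range f ∧ P ≠ Q ∧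
        A.submodule ≤ P.submodule ⊔ Q.submodule then 1 else 0 := by
  have hsub : Subsingleton
      {e : Finset ι // #e = 2 ∧ A.submodule ≤ e.sup fun i => (f i).submodule} :=
    ⟨fun e e' => Subtype.ext (hf.eq_of_le_sup_of_le_sup hV hA e.2.1 e'.2.1 e.2.2 e'.2.2)⟩
  split_ifs with h
  · obtain ⟨_, _, ⟨i, rfl⟩, ⟨j, rfl⟩, hne, hle⟩ := h
    have hij : i ≠ j := fun h => hne (h ▸ rfl)
    exact Nat.card_eq_one_iff_unique.mpr ⟨hsub, ⟨⟨{i, j}, card_pair hij, by simpa using hle⟩⟩⟩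
  · rw [Nat.card_eq_zero]
    left
    constructor
    rintro ⟨e, he, hle⟩
    obtain ⟨i, j, hij, rfl⟩ := card_eq_two.mp he
    exact h ⟨f i, f j, ⟨i, rfl⟩, ⟨j, rfl⟩, (hf.injective (by omega)).ne hij, by simpa using hle⟩

variable [Finite K] [FiniteDimensional K V] [Fintype ι]

theorem card_add_three_mul_card (hf : InGeneralPosition f) (hV : finrank K V = 4) (A : ℙ K V) :
    Nat.card {W : Submodule K V // finrank K W = 3 ∧ A.submodule ≤ W ∧
        {i | (f i).submodule ≤ W}.ncard = 2} +
      3 * Nat.card {W : Submodule K V // finrank K W = 3 ∧ A.submodule ≤ W ∧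
        {i | (f i).submodule ≤ W}.ncard = 3} =
    (Fintype.card ι).choose 2 + Nat.card K *
      Nat.card {e : Finset ι // #e = 2 ∧ A.submodule ≤ e.sup fun i => (f i).submodule} := by
  classical
  have : Finite V := Module.finite_of_finite K
  have : Fintype (Submodule K V) := Fintype.ofFinite _
  set P : Finset (Submodule K V) := {W | finrank K W = 3 ∧ A.submodule ≤ W}
  have hcount := sum_choose_two_eq_sum_card_sup_le P fun i => (f i).submodule
  have hplane (W) (hW : W ∈ P) : #{i | (f i).submodule ≤ W} ≤ 3 := by
    have hW3 := (mem_filter.mp hW).2.1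
    simpa [hW3] using hf.card_le_finrank (W := W) (by omega) (s := {i | (f i).submodule ≤ W})
      (by simp)
  have hpair (e) (he : e ∈ powersetCard 2 univ) :
      #{W ∈ P | (e.sup fun i => (f i).submodule) ≤ W} =
        1 + Nat.card K * if A.submodule ≤ e.sup fun i => (f i).submodule then 1 else 0 := by
    have hline := (hf e (by rw [(mem_powersetCard.mp he).2]; omega)).finrank_sup_submodule
    rw [(mem_powersetCard.mp he).2] at hline
    have := card_planes_through_point_and_line hV A hline
    rw [Nat.card_eq_fintype_card, Fintype.card_subtype] at this
    simp only [P, filter_filter, and_assoc, this]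
    split_ifs <;> ring
  rw [sum_choose_two_eq_of_le_three hplane, sum_congr rfl hpair, sum_add_distrib, ← mul_sum,
    sum_boole, sum_const, card_powersetCard, card_univ, smul_eq_mul, mul_one] at hcount
  convert hcount using 3 <;> simp only [Nat.card_eq_fintype_card, Fintype.card_subtype] <;>
    congr 1 <;> ext <;> simp [P, Set.ncard_eq_toFinset_card', and_assoc]

end InGeneralPosition

end GeneralPosition

namespace TwistedCubic

variable {F}

def vec : Option F → Fin 4 → F
  | none => ![1, 0, 0, 0]
  | some t => ![t ^ 3, t ^ 2, t, 1]

theorem vec_ne_zero : ∀ o : Option F, vec o ≠ 0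
  | none => e0_ne_zero F
  | some t => cubic_ne_zero F t

def point (o : Option F) : ℙ F (Fin 4 → F) := mk F (vec o) (vec_ne_zero o)

theorem range_point : Set.range (point (F := F)) = twistedCubic F := by
  ext x
  constructor
  · rintro ⟨_ | t, rfl⟩
    exacts [Or.inr rfl, Or.inl ⟨t, rfl⟩]
  · rintro (⟨t, rfl⟩ | rfl)
    exacts [⟨some t, rfl⟩, ⟨none, rfl⟩]

theorem linearIndepOn_vec_map_some {S : Finset F} (hS : #S ≤ 4) :
    LinearIndepOn F vec (S.map .some : Set (Option F)) := by
  rw [linearIndepOn_finset_iff]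
  intro g hg
  rw [sum_map] at hg
  have hcoord (j : Fin 4) : ∑ t ∈ S, g (some t) * vec (some t) j = 0 := by
    simpa using congr_fun hg j
  have hS0 := eq_zero_of_forall_sum_mul_pow_eq_zero (S := S) (c := fun t => g (some t))
    fun e he => by
      have : e < 4 := by omega
      interval_cases e
      · simpa [vec] using hcoord 3
      · simpa [vec] using hcoord 2
      · simpa [vec] using hcoord 1
      · simpa [vec] using hcoord 0
  simpa using hS0

theorem linearIndepOn_vec_insertNone {S : Finset F} (hS : #S ≤ 3) :
    LinearIndepOn F vec (insertNone S : Set (Option F)) := by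
  rw [linearIndepOn_finset_iff]
  intro g hg
  rw [sum_insertNone] at hg
  have hcoord (j : Fin 4) :
      g none * vec none j + ∑ t ∈ S, g (some t) * vec (some t) j = 0 := by
    simpa using congr_fun hg j
  have hS0 := eq_zero_of_forall_sum_mul_pow_eq_zero (S := S) (c := fun t => g (some t))
    fun e he => by
      have : e < 3 := by omega
      interval_cases e
      · simpa [vec] using hcoord 3
      · simpa [vec] using hcoord 2
      · simpa [vec] using hcoord 1
  have hnone : g none = 0 := by
    have h0 := hcoord 0
    rw [sum_eq_zero fun t ht => by rw [hS0 t ht, zero_mul], add_zero] at h0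
    simpa [vec] using h0
  rintro (_ | t) ho
  exacts [hnone, hS0 t (by simpa using ho)]

theorem linearIndepOn_vec {s : Finset (Option F)} (hs : #s ≤ 4) :
    LinearIndepOn F vec (s : Set (Option F)) := by
  classical
  by_cases hnone : none ∈ s
  · refine (linearIndepOn_vec_insertNone (S := eraseNone s) ?_).mono ?_
    · rw [card_eraseNone_eq_card_erase, card_erase_of_mem hnone]
      omega
    · rw [insertNone_eraseNone, coe_insert]
      exact Set.subset_insert _ _
  · refine (linearIndepOn_vec_map_some (S := eraseNone s) ?_).mono ?_
    · rwa [card_eraseNone_eq_card_erase, erase_eq_of_notMem hnone]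
    · rw [map_some_eraseNone, erase_eq_of_notMem hnone]

theorem inGeneralPosition_point : InGeneralPosition (point (F := F)) := fun _ hs =>
  supIndep_submodule_mk vec_ne_zero (linearIndepOn_vec (by rwa [finrank_fin_fun] at hs))

theorem ncard_twistedCubic_inter_planePts (W : Submodule F (Fin 4 → F)) :
    (twistedCubic F ∩ planePts F W).ncard = {o | (point o).submodule ≤ W}.ncard := by
  rw [← range_point, ← Set.image_preimage_eq_range_inter,
    Set.ncard_image_of_injective _ (inGeneralPosition_point.injective (by simp))]
  rfl

end TwistedCubic

/-- For a point `A` of `PG(3,q)` off the twisted cubic `C`, with `n_d(A)` the number of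
planes through `A` meeting `C` in exactly `d` points: if `A` lies on no real chord of `C`
then `n₂(A) + 3·n₃(A) = q(q+1)/2`, while if `A` lies on a real chord then
`n₂(A) + 3·n₃(A) = (q²+3q)/2`. -/
theorem stmt7 (q : ℕ) [Fintype F] (hq : Fintype.card F = q)
    (A : Projectivization F (Fin 4 → F)) (hA : A ∉ twistedCubic F) :
    ((¬ ∃ P Q : Projectivization F (Fin 4 → F), P ∈ twistedCubic F ∧ Q ∈ twistedCubic F ∧
        P ≠ Q ∧ A.submodule ≤ P.submodule ⊔ Q.submodule) →
      Nat.card {W : Submodule F (Fin 4 → F) // Module.finrank F W = 3 ∧ A.submodule ≤ W ∧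
          (twistedCubic F ∩ planePts F W).ncard = 2} +
        3 * Nat.card {W : Submodule F (Fin 4 → F) // Module.finrank F W = 3 ∧
          A.submodule ≤ W ∧ (twistedCubic F ∩ planePts F W).ncard = 3} = q * (q + 1) / 2) ∧
    ((∃ P Q : Projectivization F (Fin 4 → F), P ∈ twistedCubic F ∧ Q ∈ twistedCubic F ∧
        P ≠ Q ∧ A.submodule ≤ P.submodule ⊔ Q.submodule) →
      Nat.card {W : Submodule F (Fin 4 → F) // Module.finrank F W = 3 ∧ A.submodule ≤ W ∧
          (twistedCubic F ∩ planePts F W).ncard = 2} +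
        3 * Nat.card {W : Submodule F (Fin 4 → F) // Module.finrank F W = 3 ∧
          A.submodule ≤ W ∧ (twistedCubic F ∩ planePts F W).ncard = 3}
        = (q ^ 2 + 3 * q) / 2) := by
  simp only [TwistedCubic.ncard_twistedCubic_inter_planePts]
  rw [← TwistedCubic.range_point] at hA ⊢
  have hf := TwistedCubic.inGeneralPosition_point (F := F)
  have hV : finrank F (Fin 4 → F) = 4 := finrank_fin_fun F
  rw [hf.card_add_three_mul_card hV A, hf.card_chords hV.ge hA, Fintype.card_option,
    Nat.card_eq_fintype_card, hq, Nat.choose_two_right, add_tsub_cancel_right]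
  refine ⟨fun h => ?_, fun h => ?_⟩
  · rw [if_neg h, mul_zero, add_zero, mul_comm]
  · rw [if_pos h, mul_one, show q ^ 2 + 3 * q = (q + 1) * q + q * 2 by ring,
      Nat.add_mul_div_right _ _ two_pos]
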